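/- Let n ≥ 2 and let x, x' ∈ {0,1}^n satisfy wt(x) ≡ wt(x') (mod 4). Suppose d_1, e_1, d_2, e_2 ∈ {1,…,n} with d_1 ≠ e_1, d_2 ≠ e_2, E(x, d_1, e_1) = E(x', d_2, e_2), and either d_1 < e_1 ≤ d_2 < e_2 or d_1 ≤ e_2 < d_2 < e_1. Define λ_1 = e_1 in the first case and λ_1 = e_2 + 1 in the second case, and let u_i = Σ_{ℓ=i}^n x_ℓ − Σ_{ℓ=i}^n x'_ℓ. Then: either u_i ≥ 0 for all i ∈ [1, λ_1 − 1] or u_i ≤ 0 for all i ∈ [1, λ_1 − 1]; either u_i ≥ 0 for all i ∈ [λ_1, n] or u_i ≤ 0 for all i ∈ [λ_1, n]; and |u_i| ≤ 2 for all i ∈ {1,…,n}. -/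
import Mathlib


/-- The bit of `x` at 1-based position `p` (junk value `0` out of range). -/
def getBit {n : ℕ} (x : Fin n → Fin 2) (p : ℕ) : Fin 2 :=
  if h : p - 1 < n then x ⟨p - 1, h⟩ else 0

/-- Hamming weight of a binary sequence. -/
def wt {n : ℕ} (x : Fin n → Fin 2) : ℕ := ∑ i, (x i : ℕ)

/-- The `j`-th order VT syndrome `f_j(x) = Σ_{i=1}^n (Σ_{ℓ=1}^i ℓ^{j-1}) x_i`. -/
def vtSyn {n : ℕ} (j : ℕ) (x : Fin n → Fin 2) : ℕ :=
  ∑ i : Fin n, (∑ l ∈ Finset.Icc 1 ((i : ℕ) + 1), l ^ (j - 1)) * (x i : ℕ)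

/-- Substitute the symbol at 1-based position `e` of `x` with its complement. -/
def substAt {n : ℕ} (x : Fin n → Fin 2) (e : ℕ) : Fin n → Fin 2 :=
  fun i => if (i : ℕ) + 1 = e then 1 - x i else x i

/-- Delete the symbol at 1-based position `d` of `x`. -/
def delAt {n : ℕ} (x : Fin n → Fin 2) (d : ℕ) : Fin (n - 1) → Fin 2 :=
  fun i => if (i : ℕ) + 1 < d then getBit x ((i : ℕ) + 1) else getBit x ((i : ℕ) + 2)

/-- `E(x,d,e)`: delete the symbol at position `d` and substitute the symbol at
position `e` of `x` (positions are 1-based, taken in the original `x`). -/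
def delSub {n : ℕ} (x : Fin n → Fin 2) (d e : ℕ) : Fin (n - 1) → Fin 2 :=
  delAt (substAt x e) d

/-- The single-deletion single-substitution error ball `B_{1,1}(x)`. -/
def ball {n : ℕ} (x : Fin n → Fin 2) : Set (Fin (n - 1) → Fin 2) :=
  {y | (∃ d ∈ Finset.Icc 1 n, y = delAt x d) ∨
       ∃ d ∈ Finset.Icc 1 n, ∃ e ∈ Finset.Icc 1 n, d ≠ e ∧ y = delSub x d e}

/-- The code `C_n(c0,c1,c2)`. -/
def codeC (n : ℕ) (c0 c1 c2 : ℕ) : Finset (Fin n → Fin 2) :=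
  Finset.univ.filter fun x =>
    x ≠ (fun _ => 0) ∧ x ≠ (fun _ => 1) ∧
    wt x % 4 = c0 ∧ vtSyn 1 x % (2 * n) = c1 ∧ vtSyn 2 x % (2 * n ^ 2) = c2

/-- `u_i = Σ_{ℓ=i}^n x_ℓ − Σ_{ℓ=i}^n x'_ℓ` (1-based positions, value in `ℤ`). -/
def uSeq {n : ℕ} (x x' : Fin n → Fin 2) (i : ℕ) : ℤ :=
  (∑ l ∈ Finset.Icc i n, ((getBit x l : ℕ) : ℤ)) -
    ∑ l ∈ Finset.Icc i n, ((getBit x' l : ℕ) : ℤ)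

lemma fin2_val_le {v : Fin 2} : (v : ℕ) ≤ 1 := Nat.lt_succ_iff.mp v.isLt

lemma fin2_one_sub (v : Fin 2) : (((1 - v : Fin 2) : ℕ) : ℤ) = 1 - ((v : ℕ) : ℤ) := by
  revert v; decide

lemma getBit_pos {n : ℕ} (x : Fin n → Fin 2) (p : ℕ) (h2 : p ≤ n) (h1 : 1 ≤ p) :
    getBit x p = x ⟨p - 1, by omega⟩ := dif_pos (by omega)

lemma getBit_substAt_self {n : ℕ} (x : Fin n → Fin 2) (e : ℕ) (h1 : 1 ≤ e) (h2 : e ≤ n) :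
    getBit (substAt x e) e = 1 - getBit x e := by
  rw [getBit_pos _ _ h2 h1, getBit_pos _ _ h2 h1]
  show (if (e-1) + 1 = e then _ else _) = _
  rw [if_pos (by omega)]

lemma getBit_substAt_ne {n : ℕ} (x : Fin n → Fin 2) (e l : ℕ) (hl : 1 ≤ l) (hne : l ≠ e) :
    getBit (substAt x e) l = getBit x l := by
  unfold getBit substAt
  split
  · exact if_neg (by simp only []; omega)
  · rfl

lemma getBit_delAt {n : ℕ} (x : Fin n → Fin 2) (d p : ℕ) (h1 : 1 ≤ p) (h2 : p ≤ n - 1) :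
    getBit (delAt x d) p = if p < d then getBit x p else getBit x (p + 1) := by
  rw [getBit_pos _ p h2 h1]
  show (if (p-1) + 1 < d then getBit x ((p-1)+1) else getBit x ((p-1)+2)) = _
  have e1 : p - 1 + 1 = p := by omega
  have e2 : p - 1 + 2 = p + 1 := by omega
  rw [e1, e2]

def sufS {n : ℕ} (x : Fin n → Fin 2) (j : ℕ) : ℤ :=
  ∑ l ∈ Finset.Ioc j n, ((getBit x l : ℕ) : ℤ)

lemma sum_Ioc_shift (f : ℕ → ℤ) (a b : ℕ) :
    ∑ l ∈ Finset.Ioc (a+1) (b+1), f l = ∑ l ∈ Finset.Ioc a b, f (l+1) := by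
  rw [← Finset.map_add_right_Ioc a b 1, Finset.sum_map]
  rfl

lemma sufS_peel {m : ℕ} (z : Fin m → Fin 2) (j : ℕ) (h1 : 1 ≤ j) (h2 : j ≤ m) :
    sufS z (j - 1) = ((getBit z j : ℕ) : ℤ) + sufS z j := by
  unfold sufS
  have h3 : Finset.Ioc (j-1) m = Finset.Icc j m := by
    rw [← Finset.Icc_add_one_left_eq_Ioc]; congr 1; omega
  rw [h3, Finset.Icc_eq_cons_Ioc h2, Finset.sum_cons]

lemma sufS_del_ge {n : ℕ} (x : Fin n → Fin 2) (d j : ℕ) (hd1 : 1 ≤ d) (hdn : d ≤ n) (hj : d ≤ j) :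
    sufS x j = sufS (delAt x d) (j - 1) := by
  unfold sufS
  have h1 : ∀ p ∈ Finset.Ioc (j-1) (n-1), ((getBit (delAt x d) p : ℕ) : ℤ)
      = ((getBit x (p+1) : ℕ) : ℤ) := by
    intro p hp
    rw [Finset.mem_Ioc] at hp
    rw [getBit_delAt x d p (by omega) hp.2, if_neg (by omega)]
  rw [Finset.sum_congr rfl h1]
  have h2 : Finset.Ioc j n = Finset.Ioc ((j-1)+1) ((n-1)+1) := by congr 1 <;> omega
  rw [h2, sum_Ioc_shift]

lemma sufS_del_lt {n : ℕ} (x : Fin n → Fin 2) (d j : ℕ) (hd1 : 1 ≤ d) (hdn : d ≤ n) (hj : j < d) :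
    sufS x j = ((getBit x d : ℕ) : ℤ) + sufS (delAt x d) j := by
  unfold sufS
  rw [← Finset.sum_Ioc_consecutive _ (show j ≤ d-1 by omega) (show d-1 ≤ n-1 by omega)]
  rw [← Finset.sum_Ioc_consecutive (fun l => ((getBit x l : ℕ) : ℤ))
      (show j ≤ d-1 by omega) (show d-1 ≤ n by omega)]
  have hA : ∀ p ∈ Finset.Ioc j (d-1), ((getBit (delAt x d) p : ℕ) : ℤ) = ((getBit x p : ℕ) : ℤ) := by
    intro p hp
    rw [Finset.mem_Ioc] at hp
    rw [getBit_delAt x d p (by omega) (by omega), if_pos (by omega)]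
  rw [Finset.sum_congr rfl hA]
  have hB : ∀ p ∈ Finset.Ioc (d-1) (n-1), ((getBit (delAt x d) p : ℕ) : ℤ)
      = ((getBit x (p+1) : ℕ) : ℤ) := by
    intro p hp
    rw [Finset.mem_Ioc] at hp
    rw [getBit_delAt x d p (by omega) hp.2, if_neg (by omega)]
  rw [Finset.sum_congr rfl hB]
  have h2 : Finset.Ioc (d-1) n = Finset.Icc d n := by rw [← Finset.Icc_add_one_left_eq_Ioc]; congr 1; omega
  rw [h2, Finset.Icc_eq_cons_Ioc hdn, Finset.sum_cons]
  have h3 : Finset.Ioc d n = Finset.Ioc ((d-1)+1) ((n-1)+1) := by congr 1 <;> omega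
  rw [h3, sum_Ioc_shift]
  ring

lemma sufS_subst_ge {n : ℕ} (x : Fin n → Fin 2) (e j : ℕ) (hj : e ≤ j) :
    sufS (substAt x e) j = sufS x j := by
  unfold sufS
  refine Finset.sum_congr rfl fun l hl => ?_
  rw [Finset.mem_Ioc] at hl
  rw [getBit_substAt_ne x e l (by omega) (by omega)]

lemma sufS_subst_lt {n : ℕ} (x : Fin n → Fin 2) (e j : ℕ) (he1 : 1 ≤ e) (hen : e ≤ n) (hj : j < e) :
    sufS (substAt x e) j = sufS x j + 1 - 2 * ((getBit x e : ℕ) : ℤ) := by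
  have key : ∑ l ∈ Finset.Ioc j n, (((getBit (substAt x e) l : ℕ) : ℤ) - ((getBit x l : ℕ) : ℤ))
      = 1 - 2 * ((getBit x e : ℕ) : ℤ) := by
    rw [Finset.sum_eq_single_of_mem e (Finset.mem_Ioc.mpr ⟨hj, hen⟩)]
    · rw [getBit_substAt_self x e he1 hen, fin2_one_sub]; ring
    · intro l hl hne
      rw [Finset.mem_Ioc] at hl
      rw [getBit_substAt_ne x e l (by omega) hne]; ring
  rw [Finset.sum_sub_distrib] at key
  unfold sufS
  linarith

lemma sufS_zero {n : ℕ} (x : Fin n → Fin 2) : sufS x 0 = (wt x : ℤ) := by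
  unfold sufS
  have h1 : Finset.Ioc 0 n = Finset.map (addRightEmbedding 1) (Finset.range n) := by
    ext l
    simp only [Finset.mem_Ioc, Finset.mem_map, Finset.mem_range, addRightEmbedding_apply]
    constructor
    · intro h; exact ⟨l-1, by omega, by omega⟩
    · rintro ⟨a, ha, rfl⟩; omega
  rw [h1, Finset.sum_map]
  have h2 : ∀ i ∈ Finset.range n, ((getBit x (addRightEmbedding 1 i) : ℕ) : ℤ)
      = (fun k => ((getBit x (k+1) : ℕ) : ℤ)) i := fun i _ => rfl
  rw [Finset.sum_congr rfl h2, ← Fin.sum_univ_eq_sum_range (fun k => ((getBit x (k+1) : ℕ) : ℤ)) n]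
  unfold wt
  push_cast
  refine Finset.sum_congr rfl fun i _ => ?_
  rw [getBit_pos x ((i:ℕ)+1) (by omega) (by omega)]
  norm_num

lemma uSeq_eq {n : ℕ} (x x' : Fin n → Fin 2) (i : ℕ) (hi : 1 ≤ i) :
    uSeq x x' i = sufS x (i-1) - sufS x' (i-1) := by
  unfold uSeq sufS
  have h : Finset.Icc i n = Finset.Ioc (i-1) n := by ext l; simp; omega
  rw [h]


/-- Claim 4, Case (v): with `λ₁ = e1` (if `d1 < e1 ≤ d2 < e2`) or
`λ₁ = e2 + 1` (if `d1 ≤ e2 < d2 < e1`), the sequence `u` is sign-constant on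
`[1,λ₁−1]` and on `[λ₁,n]`, and `|u_i| ≤ 2` everywhere. -/
theorem stmt18 (n : ℕ) (hn : 2 ≤ n) (x x' : Fin n → Fin 2)
    (hwt : wt x ≡ wt x' [MOD 4])
    (d1 e1 d2 e2 lam1 : ℕ)
    (hd1 : d1 ∈ Finset.Icc 1 n) (he1 : e1 ∈ Finset.Icc 1 n)
    (hd2 : d2 ∈ Finset.Icc 1 n) (he2 : e2 ∈ Finset.Icc 1 n)
    (h1 : d1 ≠ e1) (h2 : d2 ≠ e2)
    (hE : delSub x d1 e1 = delSub x' d2 e2)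
    (hcase : (d1 < e1 ∧ e1 ≤ d2 ∧ d2 < e2 ∧ lam1 = e1) ∨
             (d1 ≤ e2 ∧ e2 < d2 ∧ d2 < e1 ∧ lam1 = e2 + 1)) :
    ((∀ i ∈ Finset.Icc 1 (lam1 - 1), 0 ≤ uSeq x x' i) ∨
      (∀ i ∈ Finset.Icc 1 (lam1 - 1), uSeq x x' i ≤ 0)) ∧
    ((∀ i ∈ Finset.Icc lam1 n, 0 ≤ uSeq x x' i) ∨
      (∀ i ∈ Finset.Icc lam1 n, uSeq x x' i ≤ 0)) ∧
    (∀ i ∈ Finset.Icc 1 n, |uSeq x x' i| ≤ 2) := by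
  rw [Finset.mem_Icc] at hd1 he1 hd2 he2
  have hEy : delAt (substAt x e1) d1 = delAt (substAt x' e2) d2 := hE
  have hw4 : wt x % 4 = wt x' % 4 := hwt
  have bX : (getBit x e1 : ℕ) ≤ 1 := fin2_val_le
  have bX' : (getBit x' e2 : ℕ) ≤ 1 := fin2_val_le
  have bP : (getBit (substAt x e1) d1 : ℕ) ≤ 1 := fin2_val_le
  have bQ : (getBit (substAt x' e2) d2 : ℕ) ≤ 1 := fin2_val_le
  rcases hcase with ⟨hA1, hA2, hA3, hlam⟩ | ⟨hB1, hB2, hB3, hlam⟩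
  all_goals subst hlam
  -- ================= CASE A : d1 < lam1 ≤ d2 < e2 =================
  · have hg1 : ∀ j, j < d1 → sufS x j - sufS x' j =
        ((getBit (substAt x lam1) d1 : ℕ) : ℤ) - ((getBit (substAt x' e2) d2 : ℕ) : ℤ)
        + 2 * ((getBit x lam1 : ℕ) : ℤ) - 2 * ((getBit x' e2 : ℕ) : ℤ) := by
      intro j hj
      have t1 := sufS_subst_lt x lam1 j he1.1 he1.2 (by omega)
      have t2 := sufS_del_lt (substAt x lam1) d1 j hd1.1 hd1.2 hj
      have t3 := sufS_subst_lt x' e2 j he2.1 he2.2 (by omega)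
      have t4 := sufS_del_lt (substAt x' e2) d2 j hd2.1 hd2.2 (by omega)
      rw [hEy] at t2
      linarith
    have hg2 : ∀ j, d1 ≤ j → j < lam1 → sufS x j - sufS x' j =
        ((getBit (delAt (substAt x lam1) d1) j : ℕ) : ℤ)
        + 2 * ((getBit x lam1 : ℕ) : ℤ) - 2 * ((getBit x' e2 : ℕ) : ℤ)
        - ((getBit (substAt x' e2) d2 : ℕ) : ℤ) := by
      intro j hj1 hj2
      have t1 := sufS_subst_lt x lam1 j he1.1 he1.2 hj2
      have t2 := sufS_del_ge (substAt x lam1) d1 j hd1.1 hd1.2 hj1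
      have t5 := sufS_peel (delAt (substAt x lam1) d1) j (by omega) (by omega)
      have t3 := sufS_subst_lt x' e2 j he2.1 he2.2 (by omega)
      have t4 := sufS_del_lt (substAt x' e2) d2 j hd2.1 hd2.2 (by omega)
      rw [← hEy] at t4
      linarith
    have hg3 : ∀ j, lam1 ≤ j → j < d2 → sufS x j - sufS x' j =
        ((getBit (delAt (substAt x lam1) d1) j : ℕ) : ℤ) + 1
        - 2 * ((getBit x' e2 : ℕ) : ℤ) - ((getBit (substAt x' e2) d2 : ℕ) : ℤ) := by
      intro j hj1 hj2
      have t1 := sufS_subst_ge x lam1 j hj1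
      have t2 := sufS_del_ge (substAt x lam1) d1 j hd1.1 hd1.2 (by omega)
      have t5 := sufS_peel (delAt (substAt x lam1) d1) j (by omega) (by omega)
      have t3 := sufS_subst_lt x' e2 j he2.1 he2.2 (by omega)
      have t4 := sufS_del_lt (substAt x' e2) d2 j hd2.1 hd2.2 hj2
      rw [← hEy] at t4
      linarith
    have hg4 : ∀ j, d2 ≤ j → j < e2 → sufS x j - sufS x' j =
        1 - 2 * ((getBit x' e2 : ℕ) : ℤ) := by
      intro j hj1 hj2
      have t1 := sufS_subst_ge x lam1 j (by omega)
      have t2 := sufS_del_ge (substAt x lam1) d1 j hd1.1 hd1.2 (by omega)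
      have t3 := sufS_subst_lt x' e2 j he2.1 he2.2 hj2
      have t4 := sufS_del_ge (substAt x' e2) d2 j hd2.1 hd2.2 hj1
      rw [← hEy] at t4
      linarith
    have hg5 : ∀ j, e2 ≤ j → sufS x j - sufS x' j = 0 := by
      intro j hj
      have t1 := sufS_subst_ge x lam1 j (by omega)
      have t2 := sufS_del_ge (substAt x lam1) d1 j hd1.1 hd1.2 (by omega)
      have t3 := sufS_subst_ge x' e2 j hj
      have t4 := sufS_del_ge (substAt x' e2) d2 j hd2.1 hd2.2 (by omega)
      rw [← hEy] at t4
      linarith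
    have hc0 : ((getBit (substAt x lam1) d1 : ℕ) : ℤ) - ((getBit (substAt x' e2) d2 : ℕ) : ℤ)
        + 2 * ((getBit x lam1 : ℕ) : ℤ) - 2 * ((getBit x' e2 : ℕ) : ℤ) = 0 := by
      have h0 := hg1 0 (by omega)
      rw [sufS_zero, sufS_zero] at h0
      omega
    have key1 : ∀ i, 1 ≤ i → i ≤ lam1 - 1 →
        ((getBit (substAt x lam1) d1 : ℕ) = 0 → 0 ≤ uSeq x x' i) ∧
        ((getBit (substAt x lam1) d1 : ℕ) = 1 → uSeq x x' i ≤ 0) := by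
      intro i hi1 hi2
      rw [uSeq_eq x x' i hi1]
      have hY : (getBit (delAt (substAt x lam1) d1) (i-1) : ℕ) ≤ 1 := fin2_val_le
      rcases Nat.lt_or_ge (i-1) d1 with h | h
      · rw [hg1 _ h]
        constructor <;> (intro hh; omega)
      · rw [hg2 (i-1) h (by omega)]
        constructor <;> (intro hh; omega)
    have key2 : ∀ i, lam1 ≤ i → i ≤ n →
        ((getBit x lam1 : ℕ) = 0 → 0 ≤ uSeq x x' i) ∧
        ((getBit x lam1 : ℕ) = 1 → uSeq x x' i ≤ 0) := by
      intro i hi1 hi2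
      rw [uSeq_eq x x' i (by omega)]
      have hY : (getBit (delAt (substAt x lam1) d1) (i-1) : ℕ) ≤ 1 := fin2_val_le
      rcases Nat.lt_or_ge (i-1) lam1 with h | h
      · have hYe : ((getBit (delAt (substAt x lam1) d1) (i-1) : ℕ) : ℤ)
            = 1 - ((getBit x lam1 : ℕ) : ℤ) := by
          have hi3 : i - 1 = lam1 - 1 := by omega
          rw [hi3, getBit_delAt _ d1 (lam1-1) (by omega) (by omega), if_neg (by omega)]
          have he : lam1 - 1 + 1 = lam1 := by omega
          rw [he, getBit_substAt_self x lam1 he1.1 he1.2, fin2_one_sub]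
        rw [hg2 (i-1) (by omega) h]
        constructor <;> (intro hh; omega)
      · rcases Nat.lt_or_ge (i-1) d2 with h3 | h3
        · rw [hg3 (i-1) h h3]
          constructor <;> (intro hh; omega)
        · rcases Nat.lt_or_ge (i-1) e2 with h4 | h4
          · rw [hg4 (i-1) h3 h4]
            constructor <;> (intro hh; omega)
          · rw [hg5 (i-1) h4]
            constructor <;> (intro hh; omega)
    refine ⟨?_, ?_, ?_⟩
    · rcases Nat.le_one_iff_eq_zero_or_eq_one.mp bP with hP | hP
      · exact Or.inl fun i hi => by
          rw [Finset.mem_Icc] at hi; exact (key1 i hi.1 hi.2).1 hP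
      · exact Or.inr fun i hi => by
          rw [Finset.mem_Icc] at hi; exact (key1 i hi.1 hi.2).2 hP
    · rcases Nat.le_one_iff_eq_zero_or_eq_one.mp bX with hX | hX
      · exact Or.inl fun i hi => by
          rw [Finset.mem_Icc] at hi; exact (key2 i hi.1 hi.2).1 hX
      · exact Or.inr fun i hi => by
          rw [Finset.mem_Icc] at hi; exact (key2 i hi.1 hi.2).2 hX
    · intro i hi
      rw [Finset.mem_Icc] at hi
      rw [uSeq_eq x x' i hi.1, abs_le]
      have hY : (getBit (delAt (substAt x lam1) d1) (i-1) : ℕ) ≤ 1 := fin2_val_le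
      rcases Nat.lt_or_ge (i-1) d1 with h | h
      · rw [hg1 _ h]; omega
      · rcases Nat.lt_or_ge (i-1) lam1 with h2 | h2
        · rw [hg2 (i-1) h h2]; omega
        · rcases Nat.lt_or_ge (i-1) d2 with h3 | h3
          · rw [hg3 (i-1) h2 h3]; omega
          · rcases Nat.lt_or_ge (i-1) e2 with h4 | h4
            · rw [hg4 (i-1) h3 h4]; omega
            · rw [hg5 (i-1) h4]; omega
  -- ================= CASE B : d1 ≤ e2 < d2 < e1 =================
  · have hg1 : ∀ j, j < d1 → sufS x j - sufS x' j =
        ((getBit (substAt x e1) d1 : ℕ) : ℤ) - ((getBit (substAt x' e2) d2 : ℕ) : ℤ)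
        + 2 * ((getBit x e1 : ℕ) : ℤ) - 2 * ((getBit x' e2 : ℕ) : ℤ) := by
      intro j hj
      have t1 := sufS_subst_lt x e1 j he1.1 he1.2 (by omega)
      have t2 := sufS_del_lt (substAt x e1) d1 j hd1.1 hd1.2 hj
      have t3 := sufS_subst_lt x' e2 j he2.1 he2.2 (by omega)
      have t4 := sufS_del_lt (substAt x' e2) d2 j hd2.1 hd2.2 (by omega)
      rw [hEy] at t2
      linarith
    have hg2 : ∀ j, d1 ≤ j → j < e2 → sufS x j - sufS x' j =
        ((getBit (delAt (substAt x e1) d1) j : ℕ) : ℤ)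
        + 2 * ((getBit x e1 : ℕ) : ℤ) - 2 * ((getBit x' e2 : ℕ) : ℤ)
        - ((getBit (substAt x' e2) d2 : ℕ) : ℤ) := by
      intro j hj1 hj2
      have t1 := sufS_subst_lt x e1 j he1.1 he1.2 (by omega)
      have t2 := sufS_del_ge (substAt x e1) d1 j hd1.1 hd1.2 hj1
      have t5 := sufS_peel (delAt (substAt x e1) d1) j (by omega) (by omega)
      have t3 := sufS_subst_lt x' e2 j he2.1 he2.2 hj2
      have t4 := sufS_del_lt (substAt x' e2) d2 j hd2.1 hd2.2 (by omega)
      rw [← hEy] at t4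
      linarith
    have hg3 : ∀ j, e2 ≤ j → j < d2 → sufS x j - sufS x' j =
        ((getBit (delAt (substAt x e1) d1) j : ℕ) : ℤ) - 1
        + 2 * ((getBit x e1 : ℕ) : ℤ) - ((getBit (substAt x' e2) d2 : ℕ) : ℤ) := by
      intro j hj1 hj2
      have t1 := sufS_subst_lt x e1 j he1.1 he1.2 (by omega)
      have t2 := sufS_del_ge (substAt x e1) d1 j hd1.1 hd1.2 (by omega)
      have t5 := sufS_peel (delAt (substAt x e1) d1) j (by omega) (by omega)
      have t3 := sufS_subst_ge x' e2 j hj1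
      have t4 := sufS_del_lt (substAt x' e2) d2 j hd2.1 hd2.2 hj2
      rw [← hEy] at t4
      linarith
    have hg4 : ∀ j, d2 ≤ j → j < e1 → sufS x j - sufS x' j =
        2 * ((getBit x e1 : ℕ) : ℤ) - 1 := by
      intro j hj1 hj2
      have t1 := sufS_subst_lt x e1 j he1.1 he1.2 hj2
      have t2 := sufS_del_ge (substAt x e1) d1 j hd1.1 hd1.2 (by omega)
      have t3 := sufS_subst_ge x' e2 j (by omega)
      have t4 := sufS_del_ge (substAt x' e2) d2 j hd2.1 hd2.2 hj1
      rw [← hEy] at t4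
      linarith
    have hg5 : ∀ j, e1 ≤ j → sufS x j - sufS x' j = 0 := by
      intro j hj
      have t1 := sufS_subst_ge x e1 j hj
      have t2 := sufS_del_ge (substAt x e1) d1 j hd1.1 hd1.2 (by omega)
      have t3 := sufS_subst_ge x' e2 j (by omega)
      have t4 := sufS_del_ge (substAt x' e2) d2 j hd2.1 hd2.2 (by omega)
      rw [← hEy] at t4
      linarith
    have hc0 : ((getBit (substAt x e1) d1 : ℕ) : ℤ) - ((getBit (substAt x' e2) d2 : ℕ) : ℤ)
        + 2 * ((getBit x e1 : ℕ) : ℤ) - 2 * ((getBit x' e2 : ℕ) : ℤ) = 0 := by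
      have h0 := hg1 0 (by omega)
      rw [sufS_zero, sufS_zero] at h0
      omega
    have key1 : ∀ i, 1 ≤ i → i ≤ e2 + 1 - 1 →
        ((getBit (substAt x e1) d1 : ℕ) = 0 → 0 ≤ uSeq x x' i) ∧
        ((getBit (substAt x e1) d1 : ℕ) = 1 → uSeq x x' i ≤ 0) := by
      intro i hi1 hi2
      rw [uSeq_eq x x' i hi1]
      have hY : (getBit (delAt (substAt x e1) d1) (i-1) : ℕ) ≤ 1 := fin2_val_le
      rcases Nat.lt_or_ge (i-1) d1 with h | h
      · rw [hg1 _ h]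
        constructor <;> (intro hh; omega)
      · rw [hg2 (i-1) h (by omega)]
        constructor <;> (intro hh; omega)
    have key2 : ∀ i, e2 + 1 ≤ i → i ≤ n →
        ((getBit x e1 : ℕ) = 1 → 0 ≤ uSeq x x' i) ∧
        ((getBit x e1 : ℕ) = 0 → uSeq x x' i ≤ 0) := by
      intro i hi1 hi2
      rw [uSeq_eq x x' i (by omega)]
      have hY : (getBit (delAt (substAt x e1) d1) (i-1) : ℕ) ≤ 1 := fin2_val_le
      rcases Nat.lt_or_ge (i-1) d2 with h | h
      · rw [hg3 (i-1) (by omega) h]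
        constructor <;> (intro hh; omega)
      · rcases Nat.lt_or_ge (i-1) e1 with h3 | h3
        · rw [hg4 (i-1) h h3]
          constructor <;> (intro hh; omega)
        · rw [hg5 (i-1) h3]
          constructor <;> (intro hh; omega)
    refine ⟨?_, ?_, ?_⟩
    · rcases Nat.le_one_iff_eq_zero_or_eq_one.mp bP with hP | hP
      · exact Or.inl fun i hi => by
          rw [Finset.mem_Icc] at hi; exact (key1 i hi.1 hi.2).1 hP
      · exact Or.inr fun i hi => by
          rw [Finset.mem_Icc] at hi; exact (key1 i hi.1 hi.2).2 hP
    · rcases Nat.le_one_iff_eq_zero_or_eq_one.mp bX with hX | hX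
      · exact Or.inr fun i hi => by
          rw [Finset.mem_Icc] at hi; exact (key2 i hi.1 hi.2).2 hX
      · exact Or.inl fun i hi => by
          rw [Finset.mem_Icc] at hi; exact (key2 i hi.1 hi.2).1 hX
    · intro i hi
      rw [Finset.mem_Icc] at hi
      rw [uSeq_eq x x' i hi.1, abs_le]
      have hY : (getBit (delAt (substAt x e1) d1) (i-1) : ℕ) ≤ 1 := fin2_val_le
      rcases Nat.lt_or_ge (i-1) d1 with h | h
      · rw [hg1 _ h]; omega
      · rcases Nat.lt_or_ge (i-1) e2 with h2 | h2
        · rw [hg2 (i-1) h h2]; omega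
        · rcases Nat.lt_or_ge (i-1) d2 with h3 | h3
          · rw [hg3 (i-1) h2 h3]; omega
          · rcases Nat.lt_or_ge (i-1) e1 with h4 | h4
            · rw [hg4 (i-1) h3 h4]; omega
            · rw [hg5 (i-1) h4]; omega
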